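/- arXiv:2310.17217 — 3 statements merged into one kernel-verified Lean document; each statement's English description precedes it below -/
import Mathlib

section
/- Let f : ℝ → ℝ be convex on [0,1], differentiable on [0,1], and have strictly positive derivative on [0,1]. Then every f-optimal distribution is the one-hot distribution δ_0 concentrated on the most probable sample: p_f(0) = 1 and p_f(i) = 0 for all i > 0. -/
/-- The data distribution on ℕ: strictly decreasing, positive, and summing to 1. -/
def IsDataDist (p : ℕ → ℝ) : Prop :=
  (∀ i j : ℕ, i < j → p i > p j) ∧ (∀ i, p i > 0) ∧ (∑' i, p i = 1)

/-- A distribution on ℕ: nonnegative and summing to 1. -/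
def IsDist (q : ℕ → ℝ) : Prop :=
  (∀ i, 0 ≤ q i) ∧ (∑' i, q i = 1)

/-- The loss of distribution `q` under criterion `f`, w.r.t. data distribution `pdata`. -/
noncomputable def lossF (pdata : ℕ → ℝ) (f : ℝ → ℝ) (q : ℕ → ℝ) : ℝ :=
  -∑' i, pdata i * f (q i)

/-- `p` is `f`-optimal: it is a distribution minimizing the loss over all distributions. -/
def IsOptimal (pdata : ℕ → ℝ) (f : ℝ → ℝ) (p : ℕ → ℝ) : Prop :=
  IsDist p ∧ ∀ q : ℕ → ℝ, IsDist q → lossF pdata f p ≤ lossF pdata f q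

/-!
Write `δ` for the one-hot distribution at `0` and `pᵢ` for `pdata i`. Convexity puts `f` below
its chord on `[0, 1]`, so every distribution `q` satisfies
`∑ pᵢ f(qᵢ) ≤ f 0 + (∑ pᵢ qᵢ) (f 1 - f 0) ≤ f 0 + p₀ (f 1 - f 0) = ∑ pᵢ f(δᵢ)`,
using `f 0 < f 1` and `pᵢ ≤ p₀`. As `pdata` is strictly decreasing, the second inequality is strict
as soon as `q` puts mass on some `j > 0`, so such a `q` is beaten by `δ` and cannot be optimal.
-/

open Set

lemma summable_of_tsum_ne_zero {α β : Type*} [AddCommMonoid α] [TopologicalSpace α] {g : β → α}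
    (h : ∑' i, g i ≠ 0) : Summable g :=
  by_contra fun hs => h (tsum_eq_zero_of_not_summable hs)

namespace IsDist

variable {q : ℕ → ℝ}

lemma summable (hq : IsDist q) : Summable q :=
  summable_of_tsum_ne_zero (hq.2 ▸ one_ne_zero)

lemma le_one (hq : IsDist q) (i : ℕ) : q i ≤ 1 :=
  hq.2 ▸ hq.summable.le_tsum i fun j _ => hq.1 j

lemma mem_Icc (hq : IsDist q) (i : ℕ) : q i ∈ Icc (0 : ℝ) 1 :=
  ⟨hq.1 i, hq.le_one i⟩

lemma single_zero : IsDist (Pi.single 0 1) :=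
  ⟨fun i => by by_cases h : i = 0 <;> simp [h], tsum_pi_single 0 1⟩

lemma apply_zero_eq_one (hq : IsDist q) (h : ∀ i, 0 < i → q i = 0) : q 0 = 1 := by
  rw [← hq.2, tsum_eq_single 0 fun i hi => h i (Nat.pos_of_ne_zero hi)]

end IsDist

lemma ConvexOn.le_chord_Icc_zero_one {f : ℝ → ℝ} (hf : ConvexOn ℝ (Icc 0 1) f) {x : ℝ}
    (hx : x ∈ Icc (0 : ℝ) 1) : f x ≤ f 0 + x * (f 1 - f 0) := by
  have h := hf.2 (left_mem_Icc.2 zero_le_one) (right_mem_Icc.2 zero_le_one)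
    (sub_nonneg.2 hx.2) hx.1 (sub_add_cancel 1 x)
  simp only [smul_eq_mul, mul_zero, mul_one, zero_add] at h
  linarith

lemma strictMonoOn_of_derivWithin_pos_of_differentiableOn {D : Set ℝ} (hD : Convex ℝ D)
    {f : ℝ → ℝ} (hf : DifferentiableOn ℝ f D) (hf' : ∀ x ∈ D, 0 < derivWithin f D x) :
    StrictMonoOn f D :=
  strictMonoOn_of_hasDerivWithinAt_pos hD hf.continuousOn
    (fun x hx => ((hf x (interior_subset hx)).hasDerivWithinAt).mono interior_subset)
    fun x hx => hf' x (interior_subset hx)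

lemma summable_mul_comp_of_monotoneOn {w q : ℕ → ℝ} {f : ℝ → ℝ} (hw : Summable w)
    (hf : MonotoneOn f (Icc 0 1)) (hq : ∀ i, q i ∈ Icc (0 : ℝ) 1) :
    Summable fun i => w i * f (q i) := by
  refine Summable.of_norm_bounded (hw.abs.mul_right (max |f 0| |f 1|)) fun i => ?_
  rw [norm_mul, Real.norm_eq_abs, Real.norm_eq_abs]
  gcongr
  exact abs_le_max_abs_abs (hf (left_mem_Icc.2 zero_le_one) (hq i) (hq i).1)
    (hf (hq i) (right_mem_Icc.2 zero_le_one) (hq i).2)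

lemma tsum_mul_lt_of_apply_pos {w q : ℕ → ℝ} (hw₀ : ∀ i, 0 ≤ w i)
    (hw : ∀ i, 0 < i → w i < w 0) (hq : IsDist q) {j : ℕ} (hj : 0 < j) (hqj : 0 < q j) : ∑' i, w i * q i < w 0 := by
  have hle : ∀ i, w i * q i ≤ w 0 * q i := fun i => by
    rcases Nat.eq_zero_or_pos i with rfl | hi
    · rfl
    · exact mul_le_mul_of_nonneg_right (hw i hi).le (hq.1 i)
  calc ∑' i, w i * q i < ∑' i, w 0 * q i :=
        Summable.tsum_lt_tsum_of_nonneg (fun i => mul_nonneg (hw₀ i) (hq.1 i)) hle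
          (mul_lt_mul_of_pos_right (hw j hj) hqj) (hq.summable.mul_left _)
    _ = w 0 := by rw [tsum_mul_left, hq.2, mul_one]

section Loss

variable {pdata : ℕ → ℝ} {f : ℝ → ℝ}

lemma lossF_single_zero (hsum : ∑' i, pdata i = 1) :
    lossF pdata f (Pi.single 0 1) = -(f 0 + pdata 0 * (f 1 - f 0)) := by
  have hterm : (fun i => pdata i * f ((Pi.single 0 1 : ℕ → ℝ) i)) =
      fun i => pdata i * f 0 + (Pi.single 0 (pdata 0 * (f 1 - f 0)) : ℕ → ℝ) i := by
    funext i
    rcases eq_or_ne i 0 with rfl | hi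
    · simp only [Pi.single_eq_same]; ring
    · simp [hi]
  have hs : Summable pdata := summable_of_tsum_ne_zero (hsum ▸ one_ne_zero)
  rw [lossF, hterm, Summable.tsum_add (hs.mul_right _) (hasSum_pi_single 0 _).summable,
    tsum_mul_right, hsum, tsum_pi_single, one_mul]

lemma neg_lossF_le_chord (hpos : ∀ i, 0 ≤ pdata i) (hsum : ∑' i, pdata i = 1)
    (hconv : ConvexOn ℝ (Icc 0 1) f) (hmono : MonotoneOn f (Icc 0 1)) {q : ℕ → ℝ}
    (hq : IsDist q) : -lossF pdata f q ≤ f 0 + (∑' i, pdata i * q i) * (f 1 - f 0) := by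
  have hs : Summable pdata := summable_of_tsum_ne_zero (hsum ▸ one_ne_zero)
  have hpq : Summable fun i => pdata i * q i :=
    Summable.of_nonneg_of_le (fun i => mul_nonneg (hpos i) (hq.1 i))
      (fun i => mul_le_of_le_one_right (hpos i) (hq.le_one i)) hs
  calc -lossF pdata f q = ∑' i, pdata i * f (q i) := neg_neg _
    _ ≤ ∑' i, (pdata i * f 0 + pdata i * q i * (f 1 - f 0)) := by
        refine Summable.tsum_le_tsum (fun i => ?_) (summable_mul_comp_of_monotoneOn hs hmono
          hq.mem_Icc) ((hs.mul_right _).add (hpq.mul_right _))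
        linarith [mul_le_mul_of_nonneg_left (hconv.le_chord_Icc_zero_one (hq.mem_Icc i)) (hpos i)]
    _ = f 0 + (∑' i, pdata i * q i) * (f 1 - f 0) := by
        rw [Summable.tsum_add (hs.mul_right _) (hpq.mul_right _), tsum_mul_right, hsum, one_mul,
          tsum_mul_right]

lemma lossF_single_zero_lt (hdata : IsDataDist pdata) (hconv : ConvexOn ℝ (Icc 0 1) f)
    (hmono : StrictMonoOn f (Icc 0 1)) {q : ℕ → ℝ} (hq : IsDist q) {j : ℕ} (hj : 0 < j)
    (hqj : 0 < q j) : lossF pdata f (Pi.single 0 1) < lossF pdata f q := by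
  obtain ⟨hanti, hpos, hsum⟩ := hdata
  have hf : f 0 < f 1 :=
    hmono (left_mem_Icc.2 zero_le_one) (right_mem_Icc.2 zero_le_one) zero_lt_one
  have hlt := tsum_mul_lt_of_apply_pos (fun i => (hpos i).le) (hanti 0) hq hj hqj
  have hle := neg_lossF_le_chord (fun i => (hpos i).le) hsum hconv hmono.monotoneOn hq
  rw [lossF_single_zero hsum]
  linarith [mul_lt_mul_of_pos_right hlt (sub_pos.2 hf)]

end Loss

/-- Paper's Theorem 2 (uniqueness direction): for an increasing convex `f` on `[0,1]`
that is differentiable with strictly positive derivative on `[0,1]`, every `f`-optimal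
distribution is the one-hot distribution concentrated on the most probable sample. -/
theorem optimal_one_hot
    (pdata : ℕ → ℝ) (hdata : IsDataDist pdata)
    (f : ℝ → ℝ)
    (hconv : ConvexOn ℝ (Set.Icc (0 : ℝ) 1) f)
    (hdiff : DifferentiableOn ℝ f (Set.Icc (0 : ℝ) 1))
    (hderiv : ∀ x ∈ Set.Icc (0 : ℝ) 1, 0 < derivWithin f (Set.Icc (0 : ℝ) 1) x)
    (p : ℕ → ℝ) (hp : IsOptimal pdata f p) :
    p 0 = 1 ∧ ∀ i : ℕ, 0 < i → p i = 0 := by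
  obtain ⟨hdist, hopt⟩ := hp
  have hmono : StrictMonoOn f (Icc 0 1) :=
    strictMonoOn_of_derivWithin_pos_of_differentiableOn (convex_Icc 0 1) hdiff hderiv
  have hzero : ∀ i, 0 < i → p i = 0 := fun i hi => by
    by_contra hne
    have hpi : 0 < p i := (hdist.1 i).lt_of_ne (Ne.symm hne)
    exact (hopt _ IsDist.single_zero).not_gt (lossF_single_zero_lt hdata hconv hmono hdist hi hpi)
  exact ⟨hdist.apply_zero_eq_one hzero, hzero⟩
end

section
/- Let f : ℝ → ℝ be differentiable, strictly increasing and convex, and let g : [0,1] → ℝ be strictly increasing, concave, three times differentiable on (0,1), and satisfy g'''(x)·g'(x) ≥ g''(x)² > 0 for all x ∈ (0,1). Let p_g be a g-optimal distribution and let p_fg be an (f∘g)-optimal distribution. Then there exists m ∈ ℕ with m ≥ 1 such that p_fg(i) ≥ p_g(i) for all i < m, p_fg(i) ≤ p_g(i) for all i ≥ m, and moreover the differences are monotonically ordered: for all i ≤ j with j < m, p_fg(i) - p_g(i) ≥ p_fg(j) - p_g(j) ≥ 0. -/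
lemma aux_dist_summable {q : ℕ → ℝ} (hq : IsDist q) : Summable q := by
  by_contra h
  have := tsum_eq_zero_of_not_summable h
  rw [hq.2] at this
  norm_num at this

lemma aux_dist_le_one {q : ℕ → ℝ} (hq : IsDist q) (i : ℕ) : q i ≤ 1 := by
  have := Summable.le_tsum (aux_dist_summable hq) i (fun j _ => hq.1 j)
  rw [hq.2] at this
  exact this

lemma aux_dist_mem_Icc {q : ℕ → ℝ} (hq : IsDist q) (i : ℕ) : q i ∈ Set.Icc (0:ℝ) 1 :=
  ⟨hq.1 i, aux_dist_le_one hq i⟩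

lemma aux_pair_le_one {q : ℕ → ℝ} (hq : IsDist q) {i j : ℕ} (hij : i ≠ j) :
    q i + q j ≤ 1 := by
  have h := Summable.sum_le_tsum ({i, j} : Finset ℕ) (fun k _ => hq.1 k) (aux_dist_summable hq)
  rw [hq.2, Finset.sum_pair hij] at h
  exact h

lemma aux_summable_weight {p w : ℕ → ℝ} (hp : Summable p) (hpnn : ∀ k, 0 ≤ p k)
    {C : ℝ} (hw : ∀ k, |w k| ≤ C) : Summable (fun k => p k * w k) := by
  apply Summable.of_abs
  apply Summable.of_nonneg_of_le (fun k => abs_nonneg _) (fun k => ?_) (hp.mul_right C)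
  rw [abs_mul, abs_of_nonneg (hpnn k)]
  exact mul_le_mul_of_nonneg_left (hw k) (hpnn k)

lemma aux_bound_of_monotone {h : ℝ → ℝ} (hm : MonotoneOn h (Set.Icc (0:ℝ) 1))
    {t : ℝ} (ht : t ∈ Set.Icc (0:ℝ) 1) : |h t| ≤ max |h 0| |h 1| := by
  have h0 : h 0 ≤ h t := hm (Set.left_mem_Icc.mpr zero_le_one) ht ht.1
  have h1 : h t ≤ h 1 := hm ht (Set.right_mem_Icc.mpr zero_le_one) ht.2
  rw [abs_le]
  constructor
  · calc -(max |h 0| |h 1|) ≤ -|h 0| := by simp [le_max_left]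
      _ ≤ h 0 := neg_abs_le _
      _ ≤ h t := h0
  · calc h t ≤ h 1 := h1
      _ ≤ |h 1| := le_abs_self _
      _ ≤ max |h 0| |h 1| := le_max_right _ _

/-- Moving mass ε from coordinate j to coordinate i cannot improve the loss. -/
lemma aux_exchange {p : ℕ → ℝ} (hp : IsDataDist p) {h : ℝ → ℝ}
    (hm : MonotoneOn h (Set.Icc (0:ℝ) 1)) {x : ℕ → ℝ} (hx : IsOptimal p h x)
    {i j : ℕ} (hij : i ≠ j) {ε : ℝ} (hε0 : 0 ≤ ε) (hεj : ε ≤ x j) :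
    p i * h (x i + ε) + p j * h (x j - ε) ≤ p i * h (x i) + p j * h (x j) := by
  obtain ⟨hxd, hopt⟩ := hx
  obtain ⟨hxnn, hxsum⟩ := hxd
  have hpsum : Summable p := by
    by_contra hc
    have := tsum_eq_zero_of_not_summable hc
    rw [hp.2.2] at this; norm_num at this
  have hpnn : ∀ k, 0 ≤ p k := fun k => (hp.2.1 k).le
  -- the perturbed distribution
  set q : ℕ → ℝ := fun k => x k + ((if k = i then ε else 0) - (if k = j then ε else 0)) with hqdef
  have hqi : q i = x i + ε := by simp [hqdef, hij]
  have hqj : q j = x j - ε := by simp [hqdef, Ne.symm hij]; ring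
  have hqk : ∀ k, k ≠ i → k ≠ j → q k = x k := by intro k h1 h2; simp [hqdef, h1, h2]
  have hsum1 : Summable (fun k : ℕ => (if k = i then ε else 0) - (if k = j then ε else 0)) := by
    apply summable_of_ne_finset_zero (s := {i, j})
    intro k hk
    simp only [Finset.mem_insert, Finset.mem_singleton, not_or] at hk
    simp [hk.1, hk.2]
  have hqsummable : Summable q := (aux_dist_summable ⟨hxnn, hxsum⟩).add hsum1
  have hqd : IsDist q := by
    constructor
    · intro k
      by_cases h1 : k = i
      · subst h1; rw [hqi]; linarith [hxnn k]
      by_cases h2 : k = j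
      · subst h2; rw [hqj]; linarith
      · rw [hqk k h1 h2]; exact hxnn k
    · have ht1 : ∑' k : ℕ, ((if k = i then ε else 0) - (if k = j then ε else 0)) = 0 := by
        rw [Summable.tsum_sub (summable_of_ne_finset_zero (s := {i}) (by intro k hk; simp at hk; simp [hk]))
            (summable_of_ne_finset_zero (s := {j}) (by intro k hk; simp at hk; simp [hk]))]
        rw [tsum_ite_eq, tsum_ite_eq]
        ring
      rw [hqdef]
      rw [Summable.tsum_add (aux_dist_summable ⟨hxnn, hxsum⟩) hsum1, hxsum, ht1, add_zero]
  -- compare losses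
  have hkey := hopt q hqd
  unfold lossF at hkey
  have hsx : Summable (fun k => p k * h (x k)) :=
    aux_summable_weight hpsum hpnn (fun k => aux_bound_of_monotone hm (aux_dist_mem_Icc ⟨hxnn, hxsum⟩ k))
  have hsq : Summable (fun k => p k * h (q k)) :=
    aux_summable_weight hpsum hpnn (fun k => aux_bound_of_monotone hm (aux_dist_mem_Icc hqd k))
  have hd : ∑' k, (p k * h (q k) - p k * h (x k)) ≤ 0 := by
    rw [Summable.tsum_sub hsq hsx]
    linarith
  have hds : ∑' k, (p k * h (q k) - p k * h (x k))
      = (p i * h (q i) - p i * h (x i)) + (p j * h (q j) - p j * h (x j)) := by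
    rw [tsum_eq_sum (s := {i, j}) (by
      intro k hk
      simp only [Finset.mem_insert, Finset.mem_singleton, not_or] at hk
      rw [hqk k hk.1 hk.2]; ring)]
    rw [Finset.sum_pair hij]
  rw [hds, hqi, hqj] at hd
  linarith

/-- Optimal distributions are ordered like the data distribution. -/
lemma aux_ordered {p : ℕ → ℝ} (hp : IsDataDist p) {h : ℝ → ℝ}
    (hsm : StrictMonoOn h (Set.Icc (0:ℝ) 1)) {x : ℕ → ℝ} (hx : IsOptimal p h x)
    {i j : ℕ} (hij : i < j) : x j ≤ x i := by
  by_contra hc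
  push_neg at hc
  have hex := aux_exchange hp hsm.monotoneOn hx hij.ne (le_of_lt (sub_pos.mpr hc))
    (by linarith [hx.1.1 i] : x j - x i ≤ x j)
  rw [show x i + (x j - x i) = x j by ring, show x j - (x j - x i) = x i by ring] at hex
  have hmem_i := aux_dist_mem_Icc hx.1 i
  have hmem_j := aux_dist_mem_Icc hx.1 j
  have hlt : h (x i) < h (x j) := hsm hmem_i hmem_j hc
  have hplt : p j < p i := hp.1 i j hij
  nlinarith

section
variable (g g' g'' g''' : ℝ → ℝ)

-- calculus facts, packaged
lemma aux_mvt {F F' : ℝ → ℝ} (hF : ∀ t ∈ Set.Ioo (0:ℝ) 1, HasDerivAt F (F' t) t)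
    {a b : ℝ} (ha : 0 < a) (hab : a < b) (hb : b < 1) :
    ∃ c ∈ Set.Ioo a b, F' c = (F b - F a) / (b - a) := by
  have hsub : Set.Icc a b ⊆ Set.Ioo (0:ℝ) 1 :=
    fun t ht => ⟨lt_of_lt_of_le ha ht.1, lt_of_le_of_lt ht.2 hb⟩
  exact exists_hasDerivAt_eq_slope F F' hab
    (fun t ht => (hF t (hsub ht)).continuousAt.continuousWithinAt)
    (fun t ht => hF t (hsub (Set.mem_Icc_of_Ioo ht)))

lemma aux_gprime_pos
    (hgmono : StrictMonoOn g (Set.Icc (0 : ℝ) 1))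
    (hgconc : ConcaveOn ℝ (Set.Icc (0 : ℝ) 1) g)
    (hg1 : ∀ x ∈ Set.Ioo (0 : ℝ) 1, HasDerivAt g (g' x) x) :
    (∀ a ∈ Set.Ioo (0:ℝ) 1, 0 < g' a) ∧
    (∀ a b, a ∈ Set.Ioo (0:ℝ) 1 → b ∈ Set.Ioo (0:ℝ) 1 → a ≤ b → g' b ≤ g' a) := by
  have hconc' : ConcaveOn ℝ (Set.Ioo (0:ℝ) 1) g :=
    hgconc.subset Set.Ioo_subset_Icc_self (convex_Ioo 0 1)
  have hanti : AntitoneOn (deriv g) (Set.Ioo (0:ℝ) 1) :=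
    hconc'.antitoneOn_deriv (fun t ht => (hg1 t ht).differentiableAt)
  have hanti' : ∀ a b, a ∈ Set.Ioo (0:ℝ) 1 → b ∈ Set.Ioo (0:ℝ) 1 → a ≤ b → g' b ≤ g' a := by
    intro a b ha hb hab
    have := hanti ha hb hab
    rwa [(hg1 a ha).deriv, (hg1 b hb).deriv] at this
  refine ⟨?_, hanti'⟩
  intro a ha
  set b := (a + 1)/2 with hbdef
  have hab : a < b := by rw [hbdef]; linarith [ha.2]
  have hb1 : b < 1 := by rw [hbdef]; linarith [ha.2]
  obtain ⟨c, hc, hceq⟩ := aux_mvt (F := g) (F' := g') hg1 ha.1 hab hb1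
  have hcmem : c ∈ Set.Ioo (0:ℝ) 1 := ⟨lt_trans ha.1 hc.1, lt_trans hc.2 hb1⟩
  have hslope : 0 < (g b - g a) / (b - a) := by
    apply div_pos _ (by linarith)
    have := hgmono (Set.mem_Icc.mpr ⟨ha.1.le, by linarith⟩)
      (Set.mem_Icc.mpr ⟨by linarith [ha.1], hb1.le⟩) hab
    linarith
  have : 0 < g' c := hceq ▸ hslope
  linarith [hanti' a c ha hcmem hc.1.le]

end

lemma aux_mvt' {F F' : ℝ → ℝ} (hF : ∀ t ∈ Set.Ioo (0:ℝ) 1, HasDerivAt F (F' t) t)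
    {a b : ℝ} (ha : 0 < a) (hab : a < b) (hb : b < 1) :
    ∃ c ∈ Set.Ioo a b, F' c = (F b - F a) / (b - a) := by
  have hsub : Set.Icc a b ⊆ Set.Ioo (0:ℝ) 1 :=
    fun t ht => ⟨lt_of_lt_of_le ha ht.1, lt_of_le_of_lt ht.2 hb⟩
  exact exists_hasDerivAt_eq_slope F F' hab
    (fun t ht => (hF t (hsub ht)).continuousAt.continuousWithinAt)
    (fun t ht => hF t (hsub (Set.mem_Icc_of_Ioo ht)))

/-- strict antitonicity of g' -/
lemma aux_gprime_strict (g' g'' g''' : ℝ → ℝ)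
    (hg2 : ∀ x ∈ Set.Ioo (0 : ℝ) 1, HasDerivAt g' (g'' x) x)
    (hcond : ∀ x ∈ Set.Ioo (0 : ℝ) 1, g''' x * g' x ≥ (g'' x) ^ 2 ∧ 0 < (g'' x) ^ 2)
    (hanti : ∀ a b, a ∈ Set.Ioo (0:ℝ) 1 → b ∈ Set.Ioo (0:ℝ) 1 → a ≤ b → g' b ≤ g' a)
    {a b : ℝ} (ha : a ∈ Set.Ioo (0:ℝ) 1) (hb : b ∈ Set.Ioo (0:ℝ) 1) (hab : a < b) :
    g' b < g' a := by
  rcases lt_or_ge (g' b) (g' a) with h | h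
  · exact h
  exfalso
  have heq : g' a = g' b := le_antisymm h (hanti a b ha hb hab.le)
  have hconst : ∀ t ∈ Set.Ioo a b, g' t = g' a := by
    intro t ht
    have h1 := hanti a t ha ⟨lt_trans ha.1 ht.1, lt_trans ht.2 hb.2⟩ ht.1.le
    have h2 := hanti t b ⟨lt_trans ha.1 ht.1, lt_trans ht.2 hb.2⟩ hb ht.2.le
    linarith [heq ▸ h2]
  set c := (a + b)/2 with hcdef
  have hcab : c ∈ Set.Ioo a b := ⟨by rw [hcdef]; linarith, by rw [hcdef]; linarith⟩
  have hcmem : c ∈ Set.Ioo (0:ℝ) 1 := ⟨lt_trans ha.1 hcab.1, lt_trans hcab.2 hb.2⟩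
  have hzero : HasDerivAt g' 0 c := by
    have hmem : Set.Ioo a b ∈ nhds c := isOpen_Ioo.mem_nhds hcab
    have : (fun _ : ℝ => g' a) =ᶠ[nhds c] g' :=
      Filter.eventuallyEq_of_mem hmem (fun t ht => (hconst t ht).symm)
    exact (hasDerivAt_const c (g' a)).congr_of_eventuallyEq this.symm
  have h0 : g'' c = 0 := (hg2 c hcmem).unique hzero
  have h1 := (hcond c hcmem).2
  rw [h0] at h1
  nlinarith

/-- monotonicity of g''/g' -/
lemma aux_phi_mono (g' g'' g''' : ℝ → ℝ)
    (hg2 : ∀ x ∈ Set.Ioo (0 : ℝ) 1, HasDerivAt g' (g'' x) x)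
    (hg3 : ∀ x ∈ Set.Ioo (0 : ℝ) 1, HasDerivAt g'' (g''' x) x)
    (hcond : ∀ x ∈ Set.Ioo (0 : ℝ) 1, g''' x * g' x ≥ (g'' x) ^ 2 ∧ 0 < (g'' x) ^ 2)
    (hpos : ∀ a ∈ Set.Ioo (0:ℝ) 1, 0 < g' a)
    {a b : ℝ} (ha : a ∈ Set.Ioo (0:ℝ) 1) (hb : b ∈ Set.Ioo (0:ℝ) 1) (hab : a ≤ b) :
    g'' a / g' a ≤ g'' b / g' b := by
  rcases eq_or_lt_of_le hab with rfl | h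
  · exact le_refl _
  have hphi : ∀ t ∈ Set.Ioo (0:ℝ) 1,
      HasDerivAt (fun u => g'' u / g' u) ((g''' t * g' t - g'' t * g'' t) / (g' t)^2) t :=
    fun t ht => (hg3 t ht).div (hg2 t ht) (ne_of_gt (hpos t ht))
  obtain ⟨c, hc, hceq⟩ := aux_mvt' hphi ha.1 h hb.2
  have hcmem : c ∈ Set.Ioo (0:ℝ) 1 := ⟨lt_trans ha.1 hc.1, lt_trans hc.2 hb.2⟩
  have hnum : 0 ≤ g''' c * g' c - g'' c * g'' c := by
    have := (hcond c hcmem).1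
    nlinarith [this]
  have hder : 0 ≤ (g''' c * g' c - g'' c * g'' c) / (g' c)^2 :=
    div_nonneg hnum (sq_nonneg _)
  rw [hceq] at hder
  have hba : 0 < b - a := by linarith
  have := mul_nonneg hder hba.le
  rw [div_mul_cancel₀ _ (ne_of_gt hba)] at this
  linarith

/-- increment comparison for L = log ∘ g' -/
lemma aux_incr (g' g'' g''' : ℝ → ℝ)
    (hg2 : ∀ x ∈ Set.Ioo (0 : ℝ) 1, HasDerivAt g' (g'' x) x)
    (hg3 : ∀ x ∈ Set.Ioo (0 : ℝ) 1, HasDerivAt g'' (g''' x) x)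
    (hcond : ∀ x ∈ Set.Ioo (0 : ℝ) 1, g''' x * g' x ≥ (g'' x) ^ 2 ∧ 0 < (g'' x) ^ 2)
    (hpos : ∀ a ∈ Set.Ioo (0:ℝ) 1, 0 < g' a)
    {a b l : ℝ} (ha : 0 < a) (hab : a ≤ b) (hl : 0 < l) (hbl : b + l < 1) :
    Real.log (g' (a + l)) - Real.log (g' a) ≤ Real.log (g' (b + l)) - Real.log (g' b) := by
  have hL : ∀ t ∈ Set.Ioo (0:ℝ) 1, HasDerivAt (fun u => Real.log (g' u)) (g'' t / g' t) t :=
    fun t ht => (hg2 t ht).log (ne_of_gt (hpos t ht))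
  have hmono := fun p q hp hq hpq =>
    aux_phi_mono g' g'' g''' hg2 hg3 hcond hpos (a := p) (b := q) hp hq hpq
  rcases eq_or_lt_of_le hab with rfl | hab'
  · exact le_refl _
  rcases le_or_gt l (b - a) with hcase | hcase
  · -- intervals [a, a+l], [b, b+l], with a + l ≤ b
    obtain ⟨τ, hτ, hτeq⟩ := aux_mvt' hL ha (by linarith : a < a + l) (by linarith)
    obtain ⟨σ, hσ, hσeq⟩ := aux_mvt' hL (by linarith : (0:ℝ) < b) (by linarith : b < b + l) hbl
    have hτm : τ ∈ Set.Ioo (0:ℝ) 1 := ⟨lt_trans ha hτ.1, by linarith [hτ.2]⟩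
    have hσm : σ ∈ Set.Ioo (0:ℝ) 1 := ⟨by linarith [hσ.1], by linarith [hσ.2]⟩
    have hts : τ ≤ σ := by linarith [hτ.2, hσ.1]
    have h1 := hmono τ σ hτm hσm hts
    rw [hτeq, hσeq] at h1
    rw [show a + l - a = l by ring, show b + l - b = l by ring] at h1
    have := (div_le_div_iff₀ hl hl).mp h1
    nlinarith
  · -- intervals [a, b], [a+l, b+l]
    obtain ⟨τ, hτ, hτeq⟩ := aux_mvt' hL ha hab' (by linarith)
    obtain ⟨σ, hσ, hσeq⟩ := aux_mvt' hL (by linarith : (0:ℝ) < a + l) (by linarith : a + l < b + l) hbl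
    have hτm : τ ∈ Set.Ioo (0:ℝ) 1 := ⟨lt_trans ha hτ.1, by linarith [hτ.2]⟩
    have hσm : σ ∈ Set.Ioo (0:ℝ) 1 := ⟨by linarith [hσ.1], by linarith [hσ.2]⟩
    have hts : τ ≤ σ := by linarith [hτ.2, hσ.1]
    have h1 := hmono τ σ hτm hσm hts
    rw [hτeq, hσeq] at h1
    rw [show b + l - (a + l) = b - a by ring] at h1
    have hba : (0:ℝ) < b - a := by linarith
    have := (div_le_div_iff₀ hba hba).mp h1
    nlinarith
set_option maxHeartbeats 1600000 in
/-- Key comparison: if `pfg` puts more mass than `pg` on the less likely coordinate `j`,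
then the difference at the more likely coordinate `i` is at least as large. -/
lemma aux_key
    (pdata : ℕ → ℝ) (hdata : IsDataDist pdata)
    (f : ℝ → ℝ)
    (hfdiff : Differentiable ℝ f)
    (hfmono : StrictMono f)
    (hfconv : ConvexOn ℝ Set.univ f)
    (g g' g'' g''' : ℝ → ℝ)
    (hgmono : StrictMonoOn g (Set.Icc (0 : ℝ) 1))
    (hgconc : ConcaveOn ℝ (Set.Icc (0 : ℝ) 1) g)
    (hg1 : ∀ x ∈ Set.Ioo (0 : ℝ) 1, HasDerivAt g (g' x) x)
    (hg2 : ∀ x ∈ Set.Ioo (0 : ℝ) 1, HasDerivAt g' (g'' x) x)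
    (hg3 : ∀ x ∈ Set.Ioo (0 : ℝ) 1, HasDerivAt g'' (g''' x) x)
    (hcond : ∀ x ∈ Set.Ioo (0 : ℝ) 1, g''' x * g' x ≥ (g'' x) ^ 2 ∧ 0 < (g'' x) ^ 2)
    (pg : ℕ → ℝ) (hpg : IsOptimal pdata g pg)
    (pfg : ℕ → ℝ) (hpfg : IsOptimal pdata (f ∘ g) pfg)
    (i j : ℕ) (hij : i < j) (hyx : pg j < pfg j) :
    pfg j - pg j ≤ pfg i - pg i := by
  obtain ⟨hgp, hganti⟩ := aux_gprime_pos g g' hgmono hgconc hg1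
  have hfgsm : StrictMonoOn (f ∘ g) (Set.Icc (0:ℝ) 1) :=
    fun a ha b hb hab => hfmono (hgmono ha hb hab)
  -- ordering of both optimal distributions
  have hxo : pg j ≤ pg i := aux_ordered hdata hgmono hpg hij
  have hyo : pfg j ≤ pfg i := aux_ordered hdata hfgsm hpfg hij
  -- notation
  set xi := pg i with hxi; set xj := pg j with hxj
  set yi := pfg i with hyi; set yj := pfg j with hyj
  rcases le_or_gt (xi - xj) 0 with hcc | hcc
  · linarith
  by_contra hcon
  push_neg at hcon
  -- basic bounds
  have hxjnn : 0 ≤ xj := hpg.1.1 j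
  have hyjpos : 0 < yj := lt_of_le_of_lt hxjnn hyx
  have hyipos : 0 < yi := lt_of_lt_of_le hyjpos hyo
  have hxipos : 0 < xi := by linarith
  have hxile : xi ≤ 1 := aux_dist_le_one hpg.1 i
  have hpair : yi + yj ≤ 1 := aux_pair_le_one hpfg.1 hij.ne
  have hyilt : yi < 1 := by linarith
  have hyjlt : yj < 1 := by linarith
  set cc := xi - xj with hccdef
  set dd := yi - yj with hdddef
  have hddnn : 0 ≤ dd := by simp [hdddef]; linarith
  have hdc : dd < cc := by simp [hccdef, hdddef]; linarith
  -- choose ε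
  set ε := min (min (xi/4) ((1-xj)/4)) (min (min (yj/4) ((1-yi)/4)) (min ((yj-xj)/4) ((cc-dd)/8))) with hε
  have hε0 : 0 < ε := by
    refine lt_min (lt_min ?_ ?_) (lt_min (lt_min ?_ ?_) (lt_min ?_ ?_)) <;> linarith
  have e1 : ε ≤ xi/4 := le_trans (min_le_left _ _) (min_le_left _ _)
  have e2 : ε ≤ (1-xj)/4 := le_trans (min_le_left _ _) (min_le_right _ _)
  have e3 : ε ≤ yj/4 := le_trans (min_le_right _ _) (le_trans (min_le_left _ _) (min_le_left _ _))
  have e4 : ε ≤ (1-yi)/4 := le_trans (min_le_right _ _) (le_trans (min_le_left _ _) (min_le_right _ _))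
  have e5 : ε ≤ (yj-xj)/4 := le_trans (min_le_right _ _) (le_trans (min_le_right _ _) (min_le_left _ _))
  have e6 : ε ≤ (cc-dd)/8 := le_trans (min_le_right _ _) (le_trans (min_le_right _ _) (min_le_right _ _))
  -- ### the g-side inequality: p j * g' η ≤ p i * g' ξ
  have hA := aux_exchange hdata hgmono.monotoneOn hpg (i := j) (j := i) hij.ne' hε0.le
    (by linarith : ε ≤ pg i)
  rw [← hxi, ← hxj] at hA
  -- MVT point ξ on [xi - 2ε, xi - ε]
  obtain ⟨ξ, hξ, hξeq⟩ := aux_mvt' hg1 (a := xi - 2*ε) (b := xi - ε)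
    (by linarith) (by linarith) (by linarith)
  rw [show xi - ε - (xi - 2*ε) = ε by ring] at hξeq
  have hξm : ξ ∈ Set.Ioo (0:ℝ) 1 := ⟨by linarith [hξ.1], by linarith [hξ.2]⟩
  -- slope comparison at the top
  have hs1 := hgconc.slope_anti_adjacent (x := xi - 2*ε) (y := xi - ε) (z := xi)
    (Set.mem_Icc.mpr ⟨by linarith, by linarith⟩) (Set.mem_Icc.mpr ⟨by linarith, hxile⟩)
    (by linarith) (by linarith)
  rw [show xi - (xi - ε) = ε by ring, show xi - ε - (xi - 2*ε) = ε by ring] at hs1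
  have htop : g xi - g (xi - ε) ≤ g' ξ * ε := by
    have h' := (div_le_div_iff₀ hε0 hε0).mp hs1
    have : g (xi - ε) - g (xi - 2*ε) = g' ξ * ε := by
      rw [hξeq]; field_simp
    nlinarith
  -- MVT point η on [xj + ε, xj + 2ε]
  obtain ⟨η, hη, hηeq⟩ := aux_mvt' hg1 (a := xj + ε) (b := xj + 2*ε)
    (by linarith) (by linarith) (by linarith)
  rw [show xj + 2*ε - (xj + ε) = ε by ring] at hηeq
  have hηm : η ∈ Set.Ioo (0:ℝ) 1 := ⟨by linarith [hη.1], by linarith [hη.2]⟩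
  have hs2 := hgconc.slope_anti_adjacent (x := xj) (y := xj + ε) (z := xj + 2*ε)
    (Set.mem_Icc.mpr ⟨hxjnn, by linarith⟩) (Set.mem_Icc.mpr ⟨by linarith, by linarith⟩)
    (by linarith) (by linarith)
  rw [show xj + ε - xj = ε by ring, show xj + 2*ε - (xj + ε) = ε by ring] at hs2
  have hbot : g' η * ε ≤ g (xj + ε) - g xj := by
    have h' := (div_le_div_iff₀ hε0 hε0).mp hs2
    have : g (xj + 2*ε) - g (xj + ε) = g' η * ε := by
      rw [hηeq]; field_simp
    nlinarith
  have hpi : 0 < pdata i := hdata.2.1 i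
  have hpj : 0 < pdata j := hdata.2.1 j
  have hG : pdata j * g' η ≤ pdata i * g' ξ := by
    have h1 : pdata j * (g (xj + ε) - g xj) ≤ pdata i * (g xi - g (xi - ε)) := by linarith
    have h2 : pdata j * (g' η * ε) ≤ pdata j * (g (xj + ε) - g xj) :=
      mul_le_mul_of_nonneg_left hbot hpj.le
    have h3 : pdata i * (g xi - g (xi - ε)) ≤ pdata i * (g' ξ * ε) :=
      mul_le_mul_of_nonneg_left htop hpi.le
    have h4 : pdata j * (g' η * ε) ≤ pdata i * (g' ξ * ε) := by linarith
    nlinarith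
  -- ### the h-side inequality: p i * g' α ≤ p j * g' β
  have hh : ∀ t ∈ Set.Ioo (0:ℝ) 1, HasDerivAt (f ∘ g) (deriv f (g t) * g' t) t :=
    fun t ht => ((hfdiff (g t)).hasDerivAt).comp t (hg1 t ht)
  have hB := aux_exchange hdata hfgsm.monotoneOn hpfg (i := i) (j := j) hij.ne hε0.le
    (by linarith : ε ≤ pfg j)
  rw [← hyi, ← hyj] at hB
  obtain ⟨α, hα, hαeq⟩ := aux_mvt' hh (a := yi) (b := yi + ε)
    hyipos (by linarith) (by linarith)
  rw [show yi + ε - yi = ε by ring] at hαeq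
  have hαm : α ∈ Set.Ioo (0:ℝ) 1 := ⟨by linarith [hα.1], by linarith [hα.2]⟩
  obtain ⟨β, hβ, hβeq⟩ := aux_mvt' hh (a := yj - ε) (b := yj)
    (by linarith) (by linarith) hyjlt
  rw [show yj - (yj - ε) = ε by ring] at hβeq
  have hβm : β ∈ Set.Ioo (0:ℝ) 1 := ⟨by linarith [hβ.1], by linarith [hβ.2]⟩
  -- f' facts
  have hf'mono : Monotone (deriv f) := by
    have := hfconv.monotoneOn_deriv (fun x _ => hfdiff x)
    exact fun a b hab => this (Set.mem_univ a) (Set.mem_univ b) hab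
  have hf'pos : ∀ u : ℝ, 0 < deriv f u := by
    intro u
    obtain ⟨c, hc, hceq⟩ := exists_hasDerivAt_eq_slope f (deriv f)
      (show u - 1 < u by linarith) (hfdiff.continuous.continuousOn)
      (fun t _ => (hfdiff t).hasDerivAt)
    have hlt : f (u - 1) < f u := hfmono (by linarith)
    have h0 : 0 < deriv f c := by
      rw [hceq]; apply div_pos (by linarith) (by linarith)
    exact lt_of_lt_of_le h0 (hf'mono hc.2.le)
  -- extract the derivative comparison
  have hHa : pdata i * (deriv f (g α) * g' α) ≤ pdata j * (deriv f (g β) * g' β) := by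
    have h1 : pdata i * ((f ∘ g) (yi + ε) - (f ∘ g) yi) ≤
        pdata j * ((f ∘ g) yj - (f ∘ g) (yj - ε)) := by linarith
    have h2 : (f ∘ g) (yi + ε) - (f ∘ g) yi = deriv f (g α) * g' α * ε := by
      rw [hαeq]; field_simp
    have h3 : (f ∘ g) yj - (f ∘ g) (yj - ε) = deriv f (g β) * g' β * ε := by
      rw [hβeq]; field_simp
    rw [h2, h3] at h1
    nlinarith
  have hβα : β < α := by linarith [hβ.2, hα.1]
  have hfgba : deriv f (g β) ≤ deriv f (g α) := by
    apply hf'mono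
    exact (hgmono (Set.mem_Icc.mpr ⟨hβm.1.le, hβm.2.le⟩)
      (Set.mem_Icc.mpr ⟨hαm.1.le, hαm.2.le⟩) hβα).le
  have hH : pdata i * g' α ≤ pdata j * g' β := by
    have h5 : pdata j * (deriv f (g β) * g' β) ≤ pdata j * (deriv f (g α) * g' β) := by
      have := mul_le_mul_of_nonneg_right hfgba (hgp β hβm).le
      exact mul_le_mul_of_nonneg_left this hpj.le
    have h6 : pdata i * (deriv f (g α) * g' α) ≤ pdata j * (deriv f (g α) * g' β) := by linarith
    have h7 : deriv f (g α) * (pdata i * g' α) ≤ deriv f (g α) * (pdata j * g' β) := by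
      nlinarith
    exact le_of_mul_le_mul_left h7 (hf'pos (g α))
  -- ### combine via logs
  set L : ℝ → ℝ := fun u => Real.log (g' u) with hL
  have hlog1 : Real.log (pdata j) + L η ≤ Real.log (pdata i) + L ξ := by
    have := Real.log_le_log (mul_pos hpj (hgp η hηm)) hG
    rwa [Real.log_mul (ne_of_gt hpj) (ne_of_gt (hgp η hηm)),
      Real.log_mul (ne_of_gt hpi) (ne_of_gt (hgp ξ hξm))] at this
  have hlog2 : Real.log (pdata i) + L α ≤ Real.log (pdata j) + L β := by
    have := Real.log_le_log (mul_pos hpi (hgp α hαm)) hH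
    rwa [Real.log_mul (ne_of_gt hpi) (ne_of_gt (hgp α hαm)),
      Real.log_mul (ne_of_gt hpj) (ne_of_gt (hgp β hβm))] at this
  have hsum : L η + L α ≤ L ξ + L β := by linarith
  -- increments
  set l := α - β with hldef
  have hlpos : 0 < l := by simp [hldef]; linarith
  have hηβ : η ≤ β := by
    have : 3*ε < yj - xj := by linarith
    linarith [hη.2, hβ.1]
  have hincr := aux_incr g' g'' g''' hg2 hg3 hcond hgp (a := η) (b := β) (l := l)
    hηm.1 hηβ hlpos (by rw [hldef]; simp; linarith [hα.2])
  rw [show β + l = α by rw [hldef]; ring] at hincr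
  -- conclude
  have hfin : L (η + l) ≤ L ξ := by linarith
  have hηl : η + l < ξ := by
    have h1 : l < dd + 2*ε := by simp [hldef, hdddef]; linarith [hα.2, hβ.1]
    have h2 : η < xj + 2*ε := hη.2
    have h3 : xi - 2*ε < ξ := hξ.1
    have : dd + 6*ε ≤ cc := by linarith
    simp [hccdef, hdddef] at this ⊢
    linarith
  have hstrict : L ξ < L (η + l) := by
    apply Real.log_lt_log (hgp ξ hξm)
    exact aux_gprime_strict g' g'' g''' hg2 hcond hganti
      ⟨by linarith [hηm.1], by linarith [hξm.2]⟩ hξm hηl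
  linarith

/-- Paper's Theorem 4: under the additional condition `g''' · g' ≥ (g'')² > 0` on `(0,1)`,
the probability mass removed from less probable samples is reallocated preferentially
to the most probable samples.  Here `g'`, `g''`, `g'''` are the first, second and
third derivatives of `g` on `(0,1)`. -/
theorem convex_composition_monotone_difference
    (pdata : ℕ → ℝ) (hdata : IsDataDist pdata)
    (f : ℝ → ℝ)
    (hfdiff : Differentiable ℝ f)
    (hfmono : StrictMono f)
    (hfconv : ConvexOn ℝ Set.univ f)
    (g g' g'' g''' : ℝ → ℝ)
    (hgmono : StrictMonoOn g (Set.Icc (0 : ℝ) 1))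
    (hgconc : ConcaveOn ℝ (Set.Icc (0 : ℝ) 1) g)
    (hg1 : ∀ x ∈ Set.Ioo (0 : ℝ) 1, HasDerivAt g (g' x) x)
    (hg2 : ∀ x ∈ Set.Ioo (0 : ℝ) 1, HasDerivAt g' (g'' x) x)
    (hg3 : ∀ x ∈ Set.Ioo (0 : ℝ) 1, HasDerivAt g'' (g''' x) x)
    (hcond : ∀ x ∈ Set.Ioo (0 : ℝ) 1, g''' x * g' x ≥ (g'' x) ^ 2 ∧ 0 < (g'' x) ^ 2)
    (pg : ℕ → ℝ) (hpg : IsOptimal pdata g pg)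
    (pfg : ℕ → ℝ) (hpfg : IsOptimal pdata (f ∘ g) pfg) :
    ∃ m : ℕ, 1 ≤ m ∧
      (∀ i : ℕ, i < m → pfg i ≥ pg i) ∧
      (∀ i : ℕ, m ≤ i → pfg i ≤ pg i) ∧
      (∀ i j : ℕ, i ≤ j → j < m →
        pfg i - pg i ≥ pfg j - pg j ∧ pfg j - pg j ≥ 0) := by

  have hkey : ∀ i j : ℕ, i < j → pg j < pfg j → pfg j - pg j ≤ pfg i - pg i :=
    fun i j hij hyx => aux_key pdata hdata f hfdiff hfmono hfconv g g' g'' g'''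
      hgmono hgconc hg1 hg2 hg3 hcond pg hpg pfg hpfg i j hij hyx
  have hs1 : Summable pg := aux_dist_summable hpg.1
  have hs2 : Summable pfg := aux_dist_summable hpfg.1
  by_cases hall : ∀ k, pfg k ≤ pg k
  · -- then the distributions agree
    have heq : ∀ k, pfg k = pg k := by
      have hsum0 : ∑' k, (pg k - pfg k) = 0 := by
        rw [Summable.tsum_sub hs1 hs2, hpg.1.2, hpfg.1.2]; ring
      intro k
      have hle := Summable.le_tsum (hs1.sub hs2) k (fun n _ => sub_nonneg.mpr (hall n))
      rw [hsum0] at hle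
      have := hall k
      linarith
    refine ⟨1, le_refl 1, ?_, ?_, ?_⟩
    · intro i hi; rw [heq i]
    · intro i _; exact hall i
    · intro i j hij hj1
      interval_cases j
      interval_cases i
      rw [heq 0]
      constructor <;> simp
  · push_neg at hall
    obtain ⟨k₀, hk₀⟩ := hall
    -- some coordinate must lose mass
    have hTne : ∃ k, pfg k < pg k := by
      by_contra hno
      push_neg at hno
      have hsum0 : ∑' k, (pfg k - pg k) = 0 := by
        rw [Summable.tsum_sub hs2 hs1, hpg.1.2, hpfg.1.2]; ring
      have hle := Summable.le_tsum (hs2.sub hs1) k₀ (fun n _ => sub_nonneg.mpr (hno n))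
      rw [hsum0] at hle
      linarith
    set m := Nat.find hTne with hm
    have hmT : pfg m < pg m := Nat.find_spec hTne
    have hmin : ∀ k, k < m → ¬ (pfg k < pg k) := fun k hk => Nat.find_min hTne hk
    have hm1 : 1 ≤ m := by
      rcases Nat.eq_zero_or_pos m with h0 | h
      · exfalso
        rw [h0] at hmT
        rcases Nat.eq_zero_or_pos k₀ with hk00 | hk0p
        · rw [hk00] at hk₀; linarith
        · have := hkey 0 k₀ hk0p hk₀; linarith
      · exact h
    refine ⟨m, hm1, ?_, ?_, ?_⟩
    · intro i hi
      exact le_of_not_gt (hmin i hi)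
    · intro i hmi
      rcases eq_or_lt_of_le hmi with rfl | h
      · exact hmT.le
      · by_contra hc
        push_neg at hc
        have := hkey m i h hc
        linarith
    · intro i j hij hjm
      have hDj : 0 ≤ pfg j - pg j := by
        have := le_of_not_gt (hmin j hjm); linarith
      refine ⟨?_, hDj⟩
      rcases eq_or_lt_of_le hij with rfl | h
      · exact le_refl _
      rcases eq_or_lt_of_le hDj with heq0 | hpos
      · have hi : i < m := lt_trans h hjm
        have := le_of_not_gt (hmin i hi)
        linarith
      · exact hkey i j h (by linarith)
end

section
/- Let g : [0,1] → ℝ be differentiable, strictly increasing (with derivative g' ≥ 0 on [0,1]) and concave, and let p_g be a g-optimal distribution. Then for all indices i < j, the first-order optimality condition holds: p_data(i) · g'(p_g(i)) ≥ p_data(j) · g'(p_g(j)). -/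
/-!
Moving mass `ε` from `p_g(i)` to `p_g(j)` yields again a distribution, so by optimality
`ε ↦ p_data(i) g(p_g(i) - ε) + p_data(j) g(p_g(j) + ε)` is maximal at `ε = 0` on a short
interval `[0, δ]`, and its right derivative there, `p_data(j) g'(p_g(j)) - p_data(i) g'(p_g(i))`,
is nonpositive. This needs `p_g(i) > 0`, `p_g(j) < 1`, and a convergent loss series (otherwise
`tsum` is the junk value `0`), which holds because `g` is continuous, hence bounded, on `[0, 1]`.
In the remaining case `p_g(i) ≤ p_g(j)`, concavity makes `g'` antitone, and the claim follows
from `p_data(j) < p_data(i)` and `g' ≥ 0`.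
-/

open Set

lemma summable_of_tsum_eq_one {q : ℕ → ℝ} (h : ∑' i, q i = 1) : Summable q := by
  by_contra hq
  simp [tsum_eq_zero_of_not_summable hq] at h

lemma IsDist.mem_Icc_s7 {q : ℕ → ℝ} (hq : IsDist q) (k : ℕ) : q k ∈ Icc (0 : ℝ) 1 :=
  ⟨hq.1 k, hq.2 ▸ (summable_of_tsum_eq_one hq.2).le_tsum k fun m _ => hq.1 m⟩

lemma summable_mul_comp_of_continuousOn {w p : ℕ → ℝ} {f : ℝ → ℝ} {s : Set ℝ}
    (hw : Summable w) (hs : IsCompact s) (hf : ContinuousOn f s) (hp : ∀ k, p k ∈ s) :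
    Summable fun k => w k * f (p k) := by
  obtain ⟨C, hC⟩ := hs.exists_bound_of_continuousOn hf
  refine Summable.of_norm_bounded (hw.abs.mul_right C) fun k => ?_
  rw [norm_mul, Real.norm_eq_abs]
  exact mul_le_mul_of_nonneg_left (hC _ (hp k)) (abs_nonneg _)

lemma ConcaveOn.antitoneOn_of_hasDerivWithinAt {f f' : ℝ → ℝ} {s : Set ℝ}
    (hf : ConcaveOn ℝ s f) (hs : UniqueDiffOn ℝ s)
    (hf' : ∀ x ∈ s, HasDerivWithinAt f (f' x) s x) : AntitoneOn f' s :=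
  (hf.antitoneOn_derivWithin fun x hx => (hf' x hx).differentiableWithinAt).congr
    fun x hx => (hf' x hx).derivWithin (hs x hx)

lemma HasDerivWithinAt.nonpos_of_isMaxOn_Icc {φ : ℝ → ℝ} {φ' a b : ℝ} (hab : a < b)
    (hφ : HasDerivWithinAt φ φ' (Icc a b) a) (hmax : IsMaxOn φ (Icc a b) a) : φ' ≤ 0 := by
  have hcone : b - a ∈ posTangentConeAt (Icc a b) a :=
    mem_posTangentConeAt_of_segment_subset (by
      rw [add_sub_cancel, segment_eq_Icc hab.le])
  have := hmax.localize.hasFDerivWithinAt_nonpos hφ.hasFDerivWithinAt hcone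
  rw [ContinuousLinearMap.toSpanSingleton_apply, smul_eq_mul] at this
  exact nonpos_of_mul_nonpos_right this (sub_pos.2 hab)

section Transfer

variable {ι : Type*} [DecidableEq ι]

def transfer (p : ι → ℝ) (i j : ι) (ε : ℝ) : ι → ℝ :=
  Function.update (Function.update p i (p i - ε)) j (p j + ε)

lemma transfer_apply_comp_eq_update {p : ι → ℝ} {i j : ι} (hij : i ≠ j) (ε : ℝ)
    (F : ι → ℝ → ℝ) :
    (fun k => F k (transfer p i j ε k)) = Function.update
      (Function.update (fun k => F k (p k)) i (F i (p i - ε))) j (F j (p j + ε)) := by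
  funext k
  rcases eq_or_ne k j with rfl | hkj
  · simp [transfer]
  rcases eq_or_ne k i with rfl | hki
  · simp [transfer, hkj]
  · simp [transfer, hkj, hki]

lemma HasSum.transfer {p : ι → ℝ} {s : ℝ} (hp : HasSum p s) {i j : ι} (hij : i ≠ j)
    (ε : ℝ) : HasSum (transfer p i j ε) s := by
  have h := (hp.update i (p i - ε)).update j (p j + ε)
  rwa [Function.update_of_ne hij.symm, show p j + ε - p j + (p i - ε - p i + s) = s by ring] at h

end Transfer

lemma IsDist.transfer {p : ℕ → ℝ} (hp : IsDist p) {i j : ℕ} (hij : i ≠ j) {ε : ℝ}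
    (hε : 0 ≤ ε) (hεi : ε ≤ p i) : IsDist (transfer p i j ε) := by
  refine ⟨fun k => ?_,
    ((summable_of_tsum_eq_one hp.2).hasSum.transfer hij ε).tsum_eq.trans hp.2⟩
  simp only [_root_.transfer, Function.update_apply]
  split_ifs <;> linarith [hp.1 k, hp.1 j]

lemma lossF_transfer {w p : ℕ → ℝ} {f : ℝ → ℝ} (hs : Summable fun k => w k * f (p k))
    {i j : ℕ} (hij : i ≠ j) (ε : ℝ) :
    lossF w f (transfer p i j ε) =
      lossF w f p - (w i * f (p i - ε) - w i * f (p i))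
        - (w j * f (p j + ε) - w j * f (p j)) := by
  have h := (hs.hasSum.update i (w i * f (p i - ε))).update j (w j * f (p j + ε))
  rw [← transfer_apply_comp_eq_update hij ε fun k x => w k * f x,
    Function.update_of_ne hij.symm] at h
  rw [lossF, lossF, h.tsum_eq]
  ring

lemma IsOptimal.transfer_le {w p : ℕ → ℝ} {f : ℝ → ℝ} (hp : IsOptimal w f p)
    (hs : Summable fun k => w k * f (p k)) {i j : ℕ} (hij : i ≠ j) {ε : ℝ}
    (hε : 0 ≤ ε) (hεi : ε ≤ p i) :
    w i * f (p i - ε) + w j * f (p j + ε) ≤ w i * f (p i) + w j * f (p j) := by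
  have := hp.2 _ (hp.1.transfer hij hε hεi)
  rw [lossF_transfer hs hij] at this
  linarith

lemma IsOptimal.mul_deriv_le_mul_deriv {w p : ℕ → ℝ} {f f' : ℝ → ℝ}
    (hp : IsOptimal w f p) (hs : Summable fun k => w k * f (p k))
    (hf : ∀ x ∈ Icc (0 : ℝ) 1, HasDerivWithinAt f (f' x) (Icc 0 1) x)
    {i j : ℕ} (hij : i ≠ j) (hi : 0 < p i) (hj : p j < 1) :
    w j * f' (p j) ≤ w i * f' (p i) := by
  set δ := min (p i) (1 - p j)
  have hδ : 0 < δ := lt_min hi (sub_pos.2 hj)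
  have hpi := hp.1.mem_Icc_s7 i
  have hpj := hp.1.mem_Icc_s7 j
  have hmaps_i : MapsTo (fun ε => p i - ε) (Icc 0 δ) (Icc 0 1) := fun ε hε =>
    ⟨by linarith [hε.2, min_le_left (p i) (1 - p j)], by linarith [hε.1, hpi.2]⟩
  have hmaps_j : MapsTo (fun ε => p j + ε) (Icc 0 δ) (Icc 0 1) := fun ε hε =>
    ⟨by linarith [hε.1, hpj.1], by linarith [hε.2, min_le_right (p i) (1 - p j)]⟩
  have hderiv : HasDerivWithinAt (fun ε => w i * f (p i - ε) + w j * f (p j + ε))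
      (w i * (f' (p i) * -1) + w j * (f' (p j) * 1)) (Icc 0 δ) 0 := by
    have hdi := (hf (p i) hpi).comp_of_eq 0 ((hasDerivWithinAt_id 0 _).const_sub (p i))
      hmaps_i (sub_zero _).symm
    have hdj := (hf (p j) hpj).comp_of_eq 0 ((hasDerivWithinAt_id 0 _).const_add (p j))
      hmaps_j (add_zero _).symm
    exact (hdi.const_mul (w i)).add (hdj.const_mul (w j))
  have hmax : IsMaxOn (fun ε => w i * f (p i - ε) + w j * f (p j + ε)) (Icc 0 δ) 0 :=
    isMaxOn_iff.2 fun ε hε => by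
      simpa using hp.transfer_le hs hij hε.1 (hε.2.trans (min_le_left _ _))
  linarith [hderiv.nonpos_of_isMaxOn_Icc hδ hmax]

theorem optimal_first_order_condition_general
    (pdata : ℕ → ℝ) (hdata : IsDataDist pdata)
    (g g' : ℝ → ℝ)
    (hgderiv : ∀ x ∈ Set.Icc (0 : ℝ) 1, HasDerivWithinAt g (g' x) (Set.Icc (0 : ℝ) 1) x)
    (hg'nonneg : ∀ x ∈ Set.Icc (0 : ℝ) 1, 0 ≤ g' x)
    (hgconc : ConcaveOn ℝ (Set.Icc (0 : ℝ) 1) g)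
    (pg : ℕ → ℝ) (hpg : IsOptimal pdata g pg) :
    ∀ i j : ℕ, i < j → pdata i * g' (pg i) ≥ pdata j * g' (pg j) := by
  intro i j hij
  obtain ⟨hdec, hpos, hsum⟩ := hdata
  have hmem := hpg.1.mem_Icc_s7
  rcases le_or_gt (pg i) (pg j) with hle | hlt
  · have hanti := hgconc.antitoneOn_of_hasDerivWithinAt (uniqueDiffOn_Icc one_pos) hgderiv
    calc pdata j * g' (pg j) ≤ pdata i * g' (pg j) :=
          mul_le_mul_of_nonneg_right (hdec i j hij).le (hg'nonneg _ (hmem j))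
      _ ≤ pdata i * g' (pg i) :=
          mul_le_mul_of_nonneg_left (hanti (hmem i) (hmem j) hle) (hpos i).le
  · have hs := summable_mul_comp_of_continuousOn (summable_of_tsum_eq_one hsum) isCompact_Icc
      (fun x hx => (hgderiv x hx).continuousWithinAt) hmem
    exact hpg.mul_deriv_le_mul_deriv hs hgderiv hij.ne ((hmem j).1.trans_lt hlt)
      (hlt.trans_le (hmem i).2)

/-- Inequality (13) of the paper (key auxiliary claim in the proof of Theorem 3):
first-order optimality condition for a `g`-optimal distribution, where `g'` denotes
the derivative of `g` on `[0,1]`. -/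
theorem optimal_first_order_condition
    (pdata : ℕ → ℝ) (hdata : IsDataDist pdata)
    (g g' : ℝ → ℝ)
    (hgderiv : ∀ x ∈ Set.Icc (0 : ℝ) 1, HasDerivWithinAt g (g' x) (Set.Icc (0 : ℝ) 1) x)
    (hg'nonneg : ∀ x ∈ Set.Icc (0 : ℝ) 1, 0 ≤ g' x)
    (hgmono : StrictMonoOn g (Set.Icc (0 : ℝ) 1))
    (hgconc : ConcaveOn ℝ (Set.Icc (0 : ℝ) 1) g)
    (pg : ℕ → ℝ) (hpg : IsOptimal pdata g pg) :
    ∀ i j : ℕ, i < j → pdata i * g' (pg i) ≥ pdata j * g' (pg j) :=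
  optimal_first_order_condition_general pdata hdata g g' hgderiv hg'nonneg hgconc pg hpg
end
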